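/- arXiv:1011.3173 — 6 statements merged into one kernel-verified Lean document; each statement's English description precedes it below -/
import Mathlib

section
/- Let A be an associative Λ-torus over a field k, with Λ finitely generated free abelian. Then every invertible element of A is homogeneous, i.e. lies in some A^λ. -/
/-!
Choose a `ℤ`-basis of `Λ`: lexicographic order on coordinates makes `Λ` a group with
*two unique sums*, i.e. for finite `S, T ⊆ Λ` with `#S * #T > 1` there are two distinct pairs
`(s, t) ∈ S × T` whose sum `s + t` arises from no other pair. In a torus, nonzero homogeneous
elements are units, so their products are nonzero. If `u v = 1` and the supports `S`, `T` of `u`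
and `v` had `#S * #T > 1`, the component of `u v` at each uniquely attained sum `s + t` would be
`u_s v_t ≠ 0`; both unique sums would then equal `0`, forcing the two pairs to coincide.
Hence `u` has a single homogeneous component.
-/

open DirectSum Finset

theorem Module.Free.twoUniqueSums (R M : Type*) [Semiring R] [TwoUniqueSums R]
    [AddCommMonoid M] [Module R M] [Module.Free R M] : TwoUniqueSums M :=
  .of_injective_addHom _ (Module.Free.chooseBasis R M).repr.injective inferInstance

namespace DirectSum

variable {ι A σ : Type*} [DecidableEq ι] [Semiring A] [SetLike σ A] [AddSubmonoidClass σ A]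
  {𝒜 : ι → σ}

theorem exists_mem_of_card_support_decompose_le_one [AddMonoid ι] [GradedRing 𝒜]
    [∀ i (x : 𝒜 i), Decidable (x ≠ 0)] {a : A} (h : #(decompose 𝒜 a).support ≤ 1) :
    ∃ i, a ∈ 𝒜 i := by
  obtain ⟨i, hi⟩ := card_le_one_iff_subset_singleton.mp h
  refine ⟨i, sum_support_decompose 𝒜 a ▸ sum_mem fun j hj => ?_⟩
  rw [mem_singleton.mp (hi hj)]
  exact SetLike.coe_mem _

theorem coe_decompose_mul_add_of_uniqueAdd [AddMonoid ι] [GradedRing 𝒜]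
    [∀ i (x : 𝒜 i), Decidable (x ≠ 0)] {a b : A} {i j : ι}
    (h : UniqueAdd (decompose 𝒜 a).support (decompose 𝒜 b).support i j) :
    (decompose 𝒜 (a * b) (i + j) : A) = decompose 𝒜 a i * decompose 𝒜 b j := by
  rw [decompose_mul, coe_mul_apply]
  refine sum_eq_single (i, j) (fun p hp hne => ?_) (fun hij => ?_)
  · simp only [mem_filter, mem_product] at hp
    exact absurd (Prod.ext_iff.mpr (h hp.1.1 hp.1.2 hp.2)) hne
  · simp only [mem_filter, mem_product, DFinsupp.mem_support_iff, and_true, not_and_or,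
      not_not] at hij
    rcases hij with h0 | h0 <;> simp [h0]

variable [AddCancelMonoid ι] [GradedRing 𝒜]

theorem card_support_decompose_mul_le_one_of_mul_mem [TwoUniqueSums ι]
    [∀ i (x : 𝒜 i), Decidable (x ≠ 0)]
    (hdom : ∀ ⦃i j : ι⦄ ⦃x y : A⦄, x ∈ 𝒜 i → y ∈ 𝒜 j → x ≠ 0 → y ≠ 0 → x * y ≠ 0)
    {a b : A} {k : ι} (hab : a * b ∈ 𝒜 k) :
    #(decompose 𝒜 a).support * #(decompose 𝒜 b).support ≤ 1 := by
  by_contra! hcard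
  have sum_eq {p : ι × ι} (hp : p ∈ (decompose 𝒜 a).support ×ˢ (decompose 𝒜 b).support)
      (hu : UniqueAdd (decompose 𝒜 a).support (decompose 𝒜 b).support p.1 p.2) :
      p.1 + p.2 = k := by
    rw [mem_product, DFinsupp.mem_support_iff, DFinsupp.mem_support_iff] at hp
    have hne : (decompose 𝒜 (a * b) (p.1 + p.2) : A) ≠ 0 := by
      rw [coe_decompose_mul_add_of_uniqueAdd hu]
      exact hdom (SetLike.coe_mem _) (SetLike.coe_mem _)
        (by simpa using hp.1) (by simpa using hp.2)
    by_contra hk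
    exact hne (decompose_of_mem_ne 𝒜 hab (Ne.symm hk))
  obtain ⟨p, hp, q, hq, hpq, hpu, hqu⟩ := TwoUniqueSums.uniqueAdd_of_one_lt_card hcard
  have hq' := mem_product.mp hq
  obtain ⟨h1, h2⟩ := hpu hq'.1 hq'.2 ((sum_eq hq hqu).trans (sum_eq hp hpu).symm)
  exact hpq (Prod.ext h1 h2).symm

theorem exists_mem_of_isUnit [TwoUniqueSums ι]
    (hdom : ∀ ⦃i j : ι⦄ ⦃x y : A⦄, x ∈ 𝒜 i → y ∈ 𝒜 j → x ≠ 0 → y ≠ 0 → x * y ≠ 0)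
    {u : A} (hu : IsUnit u) : ∃ i, u ∈ 𝒜 i := by
  classical
  obtain ⟨v, hv⟩ := hu.exists_right_inv
  have hcard := card_support_decompose_mul_le_one_of_mul_mem hdom
    (hv ▸ SetLike.GradedOne.one_mem : u * v ∈ 𝒜 0)
  apply exists_mem_of_card_support_decompose_le_one
  rcases (decompose 𝒜 v).support.eq_empty_or_nonempty with hT | hT
  · have hv0 : v = 0 := by rw [← sum_support_decompose 𝒜 v, hT, sum_empty]
    have hu0 : u = 0 := by rw [← mul_one u, ← hv, hv0, mul_zero, mul_zero]
    simp [hu0]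
  · exact le_of_mul_le_of_one_le_left hcard hT.card_pos

end DirectSum

def IsTorus {k Λ A : Type*} [CommSemiring k] [Semiring A] [Algebra k A] (𝒜 : Λ → Submodule k A) : Prop :=
  ∀ lam : Λ, ∃ u : Aˣ, (u : A) ∈ 𝒜 lam ∧ 𝒜 lam = Submodule.span k {(u : A)}

theorem IsTorus.isUnit_of_mem_of_ne_zero {k Λ A : Type*} [Field k] [Semiring A] [Algebra k A]
    {𝒜 : Λ → Submodule k A} (htorus : IsTorus 𝒜) {lam : Λ} {x : A} (hx : x ∈ 𝒜 lam) (hx0 : x ≠ 0) : IsUnit x := by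
  obtain ⟨w, -, hspan⟩ := htorus lam
  rw [hspan, Submodule.mem_span_singleton] at hx
  obtain ⟨c, rfl⟩ := hx
  have hc : c ≠ 0 := by rintro rfl; exact hx0 (zero_smul k _)
  rw [Algebra.smul_def]
  exact ((Ne.isUnit hc).map (algebraMap k A)).mul w.isUnit

theorem stmt_5_general (k : Type) [Field k] (Λ : Type) [AddCommGroup Λ] [DecidableEq Λ]
    [Module.Free ℤ Λ]
    (A : Type) [Ring A] [Algebra k A]
    (𝒜 : Λ → Submodule k A) [GradedAlgebra 𝒜]
    (htorus : ∀ lam : Λ, ∃ u : Aˣ, (u : A) ∈ 𝒜 lam ∧ 𝒜 lam = Submodule.span k {(u : A)}) :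
    ∀ u : Aˣ, ∃ lam : Λ, (u : A) ∈ 𝒜 lam := by
  have := Module.Free.twoUniqueSums ℤ Λ
  intro u
  refine exists_mem_of_isUnit (fun i j x y hx hy hx0 hy0 => ?_) u.isUnit
  have := nontrivial_of_ne x 0 hx0
  exact ((IsTorus.isUnit_of_mem_of_ne_zero htorus hx hx0).mul
    (IsTorus.isUnit_of_mem_of_ne_zero htorus hy hy0)).ne_zero

/-- In an associative `Λ`-torus over a field `k` (`Λ` finitely generated free abelian),
every invertible element is homogeneous, i.e. lies in some `A^λ`. -/
theorem stmt_5 (k : Type) [Field k] (Λ : Type) [AddCommGroup Λ] [DecidableEq Λ]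
    [Module.Free ℤ Λ] [Module.Finite ℤ Λ]
    (A : Type) [Ring A] [Algebra k A]
    (𝒜 : Λ → Submodule k A) [GradedAlgebra 𝒜]
    (htorus : ∀ lam : Λ, ∃ u : Aˣ, (u : A) ∈ 𝒜 lam ∧ 𝒜 lam = Submodule.span k {(u : A)}) :
    ∀ u : Aˣ, ∃ lam : Λ, (u : A) ∈ 𝒜 lam :=
  stmt_5_general k Λ A 𝒜 htorus
end

section
/- Let (A, −) be an associative Λ-torus with involution over a field k of characteristic 0, and suppose the involution is of second kind, i.e. there exists a nonzero homogeneous element s₀ ∈ Z(A) with s̄₀ = −s₀. Then Z(A) ∩ A₋ = s₀ · Z(A,−) and A₋ = s₀ · A₊, where A₊ and A₋ are the +1 and −1 eigenspaces of the involution. Consequently [Γ(A) : Γ(A,−)] = 2, where Γ(A) = supp_Λ(Z(A)) and Γ(A,−) = supp_Λ(Z(A) ∩ A₊). -/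
/-!
Since `s₀` is a central unit with `s̄₀ = -s₀`, left multiplication by `s₀` is a bijection of `A`
that preserves the centre and exchanges symmetric and skew elements; this gives both
factorisations.

For the index, nonzero homogeneous elements of a torus are units, so `Γ(A)` and `Γ(A,-)` are the
degree supports of groups of units, hence subgroups of `Λ`. If `z` is central of degree `λ`, then
`z + z̄` is symmetric of degree `λ` unless `z` is skew, and then `s₀ z` is symmetric of degree
`λ₀ + λ`; so `Γ(A) = Γ(A,-) ∪ (λ₀ + Γ(A,-))`. Finally `λ₀ ∉ Γ(A,-)`, because the one-dimensional
component `A^λ₀` cannot contain both a nonzero symmetric element and the skew element `s₀`.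
-/

open DirectSum Submodule

section AntiInvolution

variable {A : Type*} [Ring A] {σ : A → A}

theorem map_one_of_antiInvolution (hanti : ∀ x y, σ (x * y) = σ y * σ x)
    (hinv : ∀ x, σ (σ x) = x) : σ 1 = 1 := by
  simpa [hinv] using (hanti (σ 1) 1).symm

theorem map_mem_center_of_antiInvolution (hanti : ∀ x y, σ (x * y) = σ y * σ x)
    (hinv : ∀ x, σ (σ x) = x) {z : A} (hz : z ∈ Set.center A) : σ z ∈ Set.center A := by
  rw [Semigroup.mem_center_iff] at hz ⊢
  intro b
  rw [← hinv b, ← hanti, ← hanti, hz]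

theorem map_units_inv_of_antiInvolution (hanti : ∀ x y, σ (x * y) = σ y * σ x)
    (hinv : ∀ x, σ (σ x) = x) {u : Aˣ} (hu : σ u = u) : σ ↑u⁻¹ = ↑u⁻¹ :=
  Units.eq_inv_of_mul_eq_one_left <| by
    rw [← hu, ← hanti, u.inv_mul, map_one_of_antiInvolution hanti hinv]

theorem map_mul_eq_neg_iff (hanti : ∀ x y, σ (x * y) = σ y * σ x) {s : A} (hs : IsUnit s)
    (hsc : s ∈ Set.center A) (hσs : σ s = -s) (z : A) :
    σ (s * z) = -(s * z) ↔ σ z = z := by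
  rw [hanti, hσs, mul_neg, neg_inj, Semigroup.mem_center_iff.mp hsc, hs.mul_right_inj]

def centerFixed (σ : A → A) (hanti : ∀ x y, σ (x * y) = σ y * σ x)
    (hinv : ∀ x, σ (σ x) = x) : Submonoid A where
  carrier := {x | x ∈ Set.center A ∧ σ x = x}
  mul_mem' := fun ⟨ha, hσa⟩ ⟨hb, hσb⟩ =>
    ⟨Set.mul_mem_center ha hb, by rw [hanti, hσa, hσb, Semigroup.mem_center_iff.mp ha]⟩
  one_mem' := ⟨Set.one_mem_center, map_one_of_antiInvolution hanti hinv⟩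

theorem units_inv_mem_centerFixed (hanti : ∀ x y, σ (x * y) = σ y * σ x)
    (hinv : ∀ x, σ (σ x) = x) {u : Aˣ} (hu : (u : A) ∈ centerFixed σ hanti hinv) :
    ↑u⁻¹ ∈ centerFixed σ hanti hinv :=
  ⟨Set.units_inv_mem_center hu.1, map_units_inv_of_antiInvolution hanti hinv hu.2⟩

end AntiInvolution

theorem mul_mem_center_iff_of_isUnit {M : Type*} [Monoid M] {s z : M} (hs : IsUnit s)
    (hsc : s ∈ Set.center M) : s * z ∈ Set.center M ↔ z ∈ Set.center M := by
  obtain ⟨u, rfl⟩ := hs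
  refine ⟨fun h => ?_, Set.mul_mem_center hsc⟩
  simpa using Set.mul_mem_center (Set.units_inv_mem_center hsc) h

theorem setOf_eq_image_mul_left {M : Type*} [Monoid M] {s : M} (hs : IsUnit s)
    {p q : M → Prop} (hpq : ∀ z, p (s * z) ↔ q z) : {x | p x} = (s * ·) '' {z | q z} := by
  obtain ⟨u, rfl⟩ := hs
  rw [← Set.image_preimage_eq {x | p x} u.mulLeft_bijective.surjective, Set.preimage_ofPred_eq]
  simp_rw [hpq]

section SecondKind

variable {A : Type*} [Ring A] {σ : A → A} {s : A}

theorem skew_eq_image_mul_fixed (hanti : ∀ x y, σ (x * y) = σ y * σ x) (hs : IsUnit s)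
    (hsc : s ∈ Set.center A) (hσs : σ s = -s) :
    {x | σ x = -x} = (s * ·) '' {x | σ x = x} :=
  setOf_eq_image_mul_left hs (map_mul_eq_neg_iff hanti hs hsc hσs)

theorem centerSkew_eq_image_mul_centerFixed (hanti : ∀ x y, σ (x * y) = σ y * σ x)
    (hs : IsUnit s) (hsc : s ∈ Set.center A) (hσs : σ s = -s) :
    {x | x ∈ Set.center A ∧ σ x = -x} = (s * ·) '' {x | x ∈ Set.center A ∧ σ x = x} :=
  setOf_eq_image_mul_left hs fun z =>
    and_congr (mul_mem_center_iff_of_isUnit hs hsc) (map_mul_eq_neg_iff hanti hs hsc hσs z)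

end SecondKind

section Graded

variable {ι A S : Type*} [DecidableEq ι] [AddGroup ι] [Ring A] [SetLike S A]
  [AddSubmonoidClass S A] (𝒜 : ι → S) [GradedRing 𝒜]

theorem SetLike.units_inv_mem_graded {u : Aˣ} {i : ι} (hu : (u : A) ∈ 𝒜 i) :
    ((u⁻¹ : Aˣ) : A) ∈ 𝒜 (-i) := by
  have h : (u : A) * decompose 𝒜 (↑u⁻¹ : A) (-i) = 1 := by
    rw [← coe_decompose_mul_add_of_left_mem 𝒜 hu, u.mul_inv, add_neg_cancel,
      decompose_of_mem_same 𝒜 SetLike.GradedOne.one_mem]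
  rw [Units.inv_eq_of_mul_eq_one_right h]
  exact SetLike.coe_mem _

def unitsSupport (M : Subgroup Aˣ) : AddSubgroup ι where
  carrier := {i | ∃ u ∈ M, (u : A) ∈ 𝒜 i}
  zero_mem' := ⟨1, M.one_mem, SetLike.GradedOne.one_mem⟩
  add_mem' := fun ⟨u, hu, hui⟩ ⟨v, hv, hvj⟩ =>
    ⟨u * v, M.mul_mem hu hv, SetLike.mul_mem_graded hui hvj⟩
  neg_mem' := fun ⟨u, hu, hui⟩ => ⟨u⁻¹, M.inv_mem hu, SetLike.units_inv_mem_graded 𝒜 hui⟩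

theorem unitsSupport_mono {M N : Subgroup Aˣ} (h : M ≤ N) : unitsSupport 𝒜 M ≤ unitsSupport 𝒜 N :=
  fun _ ⟨u, hu, hui⟩ => ⟨u, h hu, hui⟩

end Graded

section Torus

variable {k : Type*} [Field k]

theorem LinearMap.eq_self_of_mem_span_singleton {M : Type*} [AddCommGroup M] [Module k M]
    (f : M →ₗ[k] M) {v z x : M} (hz : z ∈ k ∙ v) (hz0 : z ≠ 0) (hfz : f z = z)
    (hx : x ∈ k ∙ v) : f x = x := by
  obtain ⟨b, rfl⟩ := mem_span_singleton.mp hz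
  obtain ⟨a, rfl⟩ := mem_span_singleton.mp hx
  have hb : b ≠ 0 := left_ne_zero_of_smul hz0
  rw [map_smul, smul_right_inj hb] at hfz
  rw [map_smul, hfz]

variable {A : Type*} [Ring A] [Algebra k A]

theorem isUnit_of_mem_span_singleton_unit {u : Aˣ} {x : A} (hx : x ∈ k ∙ (u : A))
    (hx0 : x ≠ 0) : IsUnit x := by
  obtain ⟨c, rfl⟩ := mem_span_singleton.mp hx
  rw [Algebra.smul_def]
  exact ((left_ne_zero_of_smul hx0).isUnit.map (algebraMap k A)).mul u.isUnit

variable {ι : Type*} {𝒜 : ι → Submodule k A}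

theorem isUnit_of_mem_of_ne_zero (htorus : ∀ i, ∃ u : Aˣ, 𝒜 i = k ∙ (u : A)) {i : ι} {x : A}
    (hx : x ∈ 𝒜 i) (hx0 : x ≠ 0) : IsUnit x := by
  obtain ⟨u, hu⟩ := htorus i
  exact isUnit_of_mem_span_singleton_unit (hu ▸ hx) hx0

variable [DecidableEq ι] [AddGroup ι] [GradedAlgebra 𝒜]

theorem mem_unitsSupport_units_iff [Nontrivial A] (htorus : ∀ i, ∃ u : Aˣ, 𝒜 i = k ∙ (u : A))
    {M : Submonoid A} (hM : ∀ {u : Aˣ}, (u : A) ∈ M → ↑u⁻¹ ∈ M) {i : ι} :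
    i ∈ unitsSupport 𝒜 M.units ↔ ∃ z ∈ M, z ∈ 𝒜 i ∧ z ≠ 0 := by
  refine ⟨fun ⟨u, ⟨huM, _⟩, hui⟩ => ⟨u, huM, hui, u.ne_zero⟩, ?_⟩
  rintro ⟨z, hzM, hzi, hz0⟩
  have hz := isUnit_of_mem_of_ne_zero htorus hzi hz0
  exact ⟨hz.unit, ⟨hzM, hM hzM⟩, hzi⟩

theorem notMem_unitsSupport_centerFixed [CharZero k]
    (htorus : ∀ i, ∃ u : Aˣ, 𝒜 i = k ∙ (u : A)) (σ : A →ₗ[k] A)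
    (hanti : ∀ x y, σ (x * y) = σ y * σ x) (hinv : ∀ x, σ (σ x) = x)
    {s : A} (hs0 : s ≠ 0) (hσs : σ s = -s) {j : ι} (hsj : s ∈ 𝒜 j) :
    j ∉ unitsSupport 𝒜 (centerFixed σ hanti hinv).units := by
  have : Nontrivial A := nontrivial_of_ne s 0 hs0
  intro hj
  obtain ⟨z, ⟨-, hσz⟩, hzj, hz0⟩ :=
    (mem_unitsSupport_units_iff htorus (units_inv_mem_centerFixed hanti hinv)).mp hj
  obtain ⟨u, hu⟩ := htorus j
  have hσs' : σ s = s := σ.eq_self_of_mem_span_singleton (hu ▸ hzj) hz0 hσz (hu ▸ hsj)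
  have : IsAddTorsionFree A := .of_isTorsionFree k A
  exact hs0 (self_eq_neg.mp (hσs'.symm.trans hσs))

theorem add_mem_or_mem_unitsSupport_centerFixed
    (htorus : ∀ i, ∃ u : Aˣ, 𝒜 i = k ∙ (u : A)) (σ : A →ₗ[k] A)
    (hanti : ∀ x y, σ (x * y) = σ y * σ x) (hinv : ∀ x, σ (σ x) = x)
    (hgr : ∀ i, ∀ x ∈ 𝒜 i, σ x ∈ 𝒜 i)
    {s : A} (hs0 : s ≠ 0) (hsc : s ∈ Set.center A) (hσs : σ s = -s) {j : ι} (hsj : s ∈ 𝒜 j)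
    {i : ι} (hi : i ∈ unitsSupport 𝒜 (Submonoid.center A).units) :
    j + i ∈ unitsSupport 𝒜 (centerFixed σ hanti hinv).units ∨
      i ∈ unitsSupport 𝒜 (centerFixed σ hanti hinv).units := by
  have : Nontrivial A := nontrivial_of_ne s 0 hs0
  simp only [mem_unitsSupport_units_iff htorus (units_inv_mem_centerFixed hanti hinv)]
  obtain ⟨z, hzc, hzi, hz0⟩ :=
    (mem_unitsSupport_units_iff htorus Set.units_inv_mem_center).mp hi
  by_cases hz : z + σ z = 0
  · refine .inl ⟨s * z, ⟨Set.mul_mem_center hsc hzc, ?_⟩, SetLike.mul_mem_graded hsj hzi, ?_⟩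
    · rw [hanti, eq_neg_of_add_eq_zero_right hz, hσs, neg_mul_neg, Semigroup.mem_center_iff.mp hsc]
    · exact ((isUnit_of_mem_of_ne_zero htorus hsj hs0).mul
        (isUnit_of_mem_of_ne_zero htorus hzi hz0)).ne_zero
  · refine .inr ⟨z + σ z, ⟨?_, ?_⟩, add_mem hzi (hgr i z hzi), hz⟩
    · exact Set.add_mem_center hzc (map_mem_center_of_antiInvolution hanti hinv hzc)
    · rw [map_add, hinv, add_comm]

theorem relIndex_unitsSupport_centerFixed_eq_two [CharZero k]
    (htorus : ∀ i, ∃ u : Aˣ, 𝒜 i = k ∙ (u : A)) (σ : A →ₗ[k] A)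
    (hanti : ∀ x y, σ (x * y) = σ y * σ x) (hinv : ∀ x, σ (σ x) = x)
    (hgr : ∀ i, ∀ x ∈ 𝒜 i, σ x ∈ 𝒜 i)
    {s : A} (hs0 : s ≠ 0) (hsc : s ∈ Set.center A) (hσs : σ s = -s) {j : ι} (hsj : s ∈ 𝒜 j) :
    (unitsSupport 𝒜 (centerFixed σ hanti hinv).units).relIndex
      (unitsSupport 𝒜 (Submonoid.center A).units) = 2 := by
  have hs := isUnit_of_mem_of_ne_zero htorus hsj hs0
  rw [AddSubgroup.relIndex_eq_two_iff_exists_notMem_and']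
  exact ⟨j, ⟨hs.unit, ⟨hsc, Set.units_inv_mem_center hsc⟩, hsj⟩,
    notMem_unitsSupport_centerFixed htorus σ hanti hinv hs0 hσs hsj,
    fun i hi => add_mem_or_mem_unitsSupport_centerFixed htorus σ hanti hinv hgr hs0 hsc hσs hsj hi⟩

end Torus

theorem stmt_7_general (k : Type) [Field k] [CharZero k] (Λ : Type) [AddCommGroup Λ] [DecidableEq Λ]
    (A : Type) [Ring A] [Algebra k A]
    (𝒜 : Λ → Submodule k A) [GradedAlgebra 𝒜]
    (htorus : ∀ lam : Λ, ∃ u : Aˣ, (u : A) ∈ 𝒜 lam ∧ 𝒜 lam = Submodule.span k {(u : A)})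
    (σ : A →ₗ[k] A) (hanti : ∀ x y : A, σ (x * y) = σ y * σ x)
    (hinv : ∀ x : A, σ (σ x) = x)
    (hgr : ∀ lam : Λ, ∀ x ∈ 𝒜 lam, σ x ∈ 𝒜 lam)
    (s₀ : A) (hs₀ne : s₀ ≠ 0) (hs₀c : s₀ ∈ Subalgebra.center k A)
    (hs₀skew : σ s₀ = -s₀) (lam₀ : Λ) (hs₀hom : s₀ ∈ 𝒜 lam₀) :
    ({x : A | x ∈ Subalgebra.center k A ∧ σ x = -x}
        = (fun z => s₀ * z) '' {x : A | x ∈ Subalgebra.center k A ∧ σ x = x}) ∧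
    ({x : A | σ x = -x} = (fun z => s₀ * z) '' {x : A | σ x = x}) ∧
    ∃ G G' : AddSubgroup Λ,
      (G : Set Λ) = {lam : Λ | ∃ z : A, z ∈ Subalgebra.center k A ∧ z ∈ 𝒜 lam ∧ z ≠ 0} ∧
      (G' : Set Λ) = {lam : Λ | ∃ z : A,
          z ∈ Subalgebra.center k A ∧ σ z = z ∧ z ∈ 𝒜 lam ∧ z ≠ 0} ∧
      G' ≤ G ∧ AddSubgroup.relIndex G' G = 2 := by
  have : Nontrivial A := nontrivial_of_ne s₀ 0 hs₀ne
  have htorus' : ∀ i, ∃ u : Aˣ, 𝒜 i = k ∙ (u : A) := fun i => (htorus i).imp fun _ => And.right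
  have hs₀ : IsUnit s₀ := isUnit_of_mem_of_ne_zero htorus' hs₀hom hs₀ne
  refine ⟨centerSkew_eq_image_mul_centerFixed hanti hs₀ hs₀c hs₀skew,
    skew_eq_image_mul_fixed hanti hs₀ hs₀c hs₀skew,
    unitsSupport 𝒜 (Submonoid.center A).units, unitsSupport 𝒜 (centerFixed σ hanti hinv).units,
    Set.ext fun _ => mem_unitsSupport_units_iff htorus' Set.units_inv_mem_center,
    Set.ext fun _ =>
      (mem_unitsSupport_units_iff htorus' (units_inv_mem_centerFixed hanti hinv)).trans
        (exists_congr fun _ => and_assoc),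
    unitsSupport_mono 𝒜 (Submonoid.units_mono fun _ hx => hx.1),
    relIndex_unitsSupport_centerFixed_eq_two htorus' σ hanti hinv hgr hs₀ne hs₀c hs₀skew hs₀hom⟩

/-- Let `(A, −)` be an associative `Λ`-torus with a (graded) involution of second kind
over a field of characteristic 0, witnessed by a nonzero homogeneous central
skew element `s₀`.  Then `Z(A) ∩ A₋ = s₀ Z(A,−)` and `A₋ = s₀ A₊`, and consequently
`[Γ(A) : Γ(A,−)] = 2`, where `Γ(A)` and `Γ(A,−)` are the supports of `Z(A)` and of
`Z(A,−) = Z(A) ∩ A₊` respectively. -/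
theorem stmt_7 (k : Type) [Field k] [CharZero k] (Λ : Type) [AddCommGroup Λ]
    [DecidableEq Λ] [Module.Free ℤ Λ] [Module.Finite ℤ Λ]
    (A : Type) [Ring A] [Algebra k A]
    (𝒜 : Λ → Submodule k A) [GradedAlgebra 𝒜]
    (htorus : ∀ lam : Λ, ∃ u : Aˣ, (u : A) ∈ 𝒜 lam ∧ 𝒜 lam = Submodule.span k {(u : A)})
    (σ : A →ₗ[k] A) (hanti : ∀ x y : A, σ (x * y) = σ y * σ x)
    (hinv : ∀ x : A, σ (σ x) = x)
    (hgr : ∀ lam : Λ, ∀ x ∈ 𝒜 lam, σ x ∈ 𝒜 lam)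
    (s₀ : A) (hs₀ne : s₀ ≠ 0) (hs₀c : s₀ ∈ Subalgebra.center k A)
    (hs₀skew : σ s₀ = -s₀) (lam₀ : Λ) (hs₀hom : s₀ ∈ 𝒜 lam₀) :
    ({x : A | x ∈ Subalgebra.center k A ∧ σ x = -x}
        = (fun z => s₀ * z) '' {x : A | x ∈ Subalgebra.center k A ∧ σ x = x}) ∧
    ({x : A | σ x = -x} = (fun z => s₀ * z) '' {x : A | σ x = x}) ∧
    ∃ G G' : AddSubgroup Λ,
      (G : Set Λ) = {lam : Λ | ∃ z : A, z ∈ Subalgebra.center k A ∧ z ∈ 𝒜 lam ∧ z ≠ 0} ∧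
      (G' : Set Λ) = {lam : Λ | ∃ z : A,
          z ∈ Subalgebra.center k A ∧ σ z = z ∧ z ∈ 𝒜 lam ∧ z ≠ 0} ∧
      G' ≤ G ∧ AddSubgroup.relIndex G' G = 2 :=
  stmt_7_general k Λ A 𝒜 htorus σ hanti hinv hgr s₀ hs₀ne hs₀c hs₀skew lam₀ hs₀hom
end

section
/- Let V be a finite-dimensional module over sl₂(k) (k a field of characteristic 0) with standard basis (e, h, f), and let v ∈ V be a nonzero vector with h·v = m v for an integer m < 0. Then e^{−m}·v ≠ 0. -/
/-!
Let `v` have weight `-n`. Applying `f` to `v` until the result dies gives a lowest weight vector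
`u = f^b v` of weight `-(n + 2b)`, and the `e`-string through `u` spans a subspace `S` stable
under `e`, `f`, `h` in which `e^i u ≠ 0` for `i ≤ n + 2b`. The weight spaces of `S` are lines, so
if `v ∈ S` then `v` is a nonzero multiple of `e^b u` and `e^n v` one of `e^(n+b) u`. Otherwise the
image of `v` in `V ⧸ S` is a nonzero vector of weight `-n` and we conclude by induction on the
dimension.
-/

open LieModule Module Set Submodule

theorem Module.End.exists_eq_zero_of_mem_eigenspace_of_injective {k V ι : Type*} [Field k]
    [AddCommGroup V] [Module k V] [FiniteDimensional k V] [Infinite ι] (A : Module.End k V)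
    {μ : ι → k} (hμ : Function.Injective μ) {g : ι → V} (hg : ∀ i, g i ∈ A.eigenspace (μ i)) :
    ∃ i, g i = 0 := by
  by_contra! hne
  have := (A.eigenvectors_linearIndependent' μ hμ g fun i ↦ ⟨hg i, hne i⟩).finite
  exact not_finite ι

theorem iSupIndep.mem_span_singleton_of_mem_span_range {R M ι : Type*} [Ring R] [AddCommGroup M]
    [Module R M] {p : ι → Submodule R M} (hp : iSupIndep p) {g : ι → M} (hg : ∀ i, g i ∈ p i)
    {v : M} (hv : v ∈ span R (range g)) {i : ι} (hvi : v ∈ p i) : v ∈ R ∙ g i := by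
  classical
  have hgi (j : ι) : R ∙ g j ≤ p j := (span_singleton_le_iff_mem _ _).mpr (hg j)
  rw [span_range_eq_iSup, iSup_split_single _ i, mem_sup] at hv
  obtain ⟨a, ha, w, hw, rfl⟩ := hv
  have hw' : w ∈ ⨆ (j) (_ : j ≠ i), p j := iSup₂_mono (fun j _ ↦ hgi j) hw
  have hwi : w ∈ p i := by simpa using sub_mem hvi (hgi i ha)
  rwa [disjoint_def.mp (hp i) w hwi hw', add_zero]

namespace Module.End

variable {R M : Type*} [Semiring R] [AddCommMonoid M] [Module R M]

def krylovSubspace (A : Module.End R M) (v : M) : Submodule R M :=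
  span R (range fun i : ℕ ↦ (A ^ i) v)

variable {A B : Module.End R M} {v : M}

theorem pow_apply_mem_krylovSubspace (i : ℕ) : (A ^ i) v ∈ A.krylovSubspace v :=
  subset_span ⟨i, rfl⟩

theorem self_mem_krylovSubspace : v ∈ A.krylovSubspace v := by
  simpa using pow_apply_mem_krylovSubspace (A := A) (v := v) 0

theorem krylovSubspace_le_comap_iff :
    A.krylovSubspace v ≤ (A.krylovSubspace v).comap B ↔
      ∀ i : ℕ, B ((A ^ i) v) ∈ A.krylovSubspace v := by
  rw [krylovSubspace, span_le, range_subset_iff]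
  rfl

theorem krylovSubspace_le_comap_self : A.krylovSubspace v ≤ (A.krylovSubspace v).comap A :=
  krylovSubspace_le_comap_iff.mpr fun i ↦ by
    simpa [pow_succ'] using pow_apply_mem_krylovSubspace (A := A) (v := v) (i + 1)

end Module.End

namespace IsSl2Triple

variable {k L M : Type*} [Field k] [LieRing L] [LieAlgebra k L]
  [AddCommGroup M] [Module k M] [LieRingModule L M] [LieModule k L M] {h e f : L}

theorem exists_hasPrimitiveVectorWith_pow_toEnd_e [CharZero k] [FiniteDimensional k M]
    (t : IsSl2Triple h e f) {v : M} (hv : v ≠ 0) {μ : k} (hμ : ⁅h, v⁆ = μ • v) :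
    ∃ b : ℕ, t.HasPrimitiveVectorWith ((toEnd k L M e ^ b) v) (μ + 2 * b) := by
  obtain ⟨i, hi⟩ := (toEnd k L M h).exists_eq_zero_of_mem_eigenspace_of_injective
    (μ := fun i : ℕ ↦ μ + 2 * i) (fun i j hij ↦ by simpa using hij)
    (g := fun i ↦ (toEnd k L M e ^ i) v) fun i ↦ Module.End.mem_eigenspace_iff.mpr
      (t.lie_h_pow_toEnd_e hμ i)
  obtain ⟨b, hb, hb1⟩ := Nat.exists_not_and_succ_of_not_zero_of_exists
    (p := fun i ↦ (toEnd k L M e ^ i) v = 0) (by simpa using hv) ⟨i, hi⟩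
  exact ⟨b, hb, t.lie_h_pow_toEnd_e hμ b, by rw [lie_e_pow_toEnd_e]; exact hb1⟩

namespace HasPrimitiveVectorWith

variable {t : IsSl2Triple h e f} {u : M} {μ : k}

theorem krylovSubspace_le_comap_toEnd_e (P : t.HasPrimitiveVectorWith u μ) :
    (toEnd k L M f).krylovSubspace u ≤
      ((toEnd k L M f).krylovSubspace u).comap (toEnd k L M e) := by
  refine Module.End.krylovSubspace_le_comap_iff.mpr fun i ↦ ?_
  cases i with
  | zero => simp [P.lie_e]
  | succ i =>
    rw [toEnd_apply_apply, P.lie_e_pow_succ_toEnd_f]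
    exact smul_mem _ _ (Module.End.pow_apply_mem_krylovSubspace i)

theorem mem_span_singleton_of_mem_krylovSubspace [CharZero k] (P : t.HasPrimitiveVectorWith u μ)
    {w : M} (hw : w ∈ (toEnd k L M f).krylovSubspace u) {i : ℕ} (hwi : ⁅h, w⁆ = (μ - 2 * i) • w) :
    w ∈ k ∙ (toEnd k L M f ^ i) u :=
  ((toEnd k L M h).eigenspaces_iSupIndep.comp fun i j hij ↦ by simpa using hij)
    |>.mem_span_singleton_of_mem_span_range
      (g := fun i : ℕ ↦ (toEnd k L M f ^ i) u)
      (fun j ↦ Module.End.mem_eigenspace_iff.mpr (P.lie_h_pow_toEnd_f j)) hw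
      (Module.End.mem_eigenspace_iff.mpr hwi)

theorem pow_toEnd_f_ne_zero_of_mem_krylovSubspace [CharZero k] {n b : ℕ}
    (P : t.HasPrimitiveVectorWith u ((n : k) + 2 * b)) {w : M}
    (hw : w ∈ (toEnd k L M f).krylovSubspace u) (hw0 : w ≠ 0) (hwh : ⁅h, w⁆ = (n : k) • w) :
    (toEnd k L M f ^ n) w ≠ 0 := by
  obtain ⟨c, rfl⟩ := mem_span_singleton.mp <|
    P.mem_span_singleton_of_mem_krylovSubspace hw (i := b) (by rw [hwh]; ring_nf)
  rw [map_smul, ← Module.End.mul_apply, ← pow_add]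
  exact smul_ne_zero (left_ne_zero_of_smul hw0)
    (P.pow_toEnd_f_ne_zero_of_eq_nat (n := n + 2 * b) (by push_cast; rfl) (by omega))

end HasPrimitiveVectorWith

end IsSl2Triple

section

attribute [local instance 100] LieRing.ofAssociativeRing

variable {k V : Type*} [Field k] [AddCommGroup V] [Module k V]

theorem Submodule.le_comap_lie {S : Submodule k V} {A B : Module.End k V} (hA : S ≤ S.comap A)
    (hB : S ≤ S.comap B) : S ≤ S.comap ⁅A, B⁆ := by
  intro x hx
  simp only [mem_comap, Ring.lie_def, LinearMap.sub_apply, Module.End.mul_apply]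
  exact sub_mem (hA (hB hx)) (hB (hA hx))

theorem Submodule.mapQ_lie {S : Submodule k V} {A B : Module.End k V} (hA : S ≤ S.comap A)
    (hB : S ≤ S.comap B) :
    ⁅S.mapQ S A hA, S.mapQ S B hB⁆ = S.mapQ S ⁅A, B⁆ (S.le_comap_lie hA hB) := by
  ext x
  simp [Ring.lie_def]

theorem IsSl2Triple.mapQ {H E F : Module.End k V} (t : IsSl2Triple H E F) {S : Submodule k V}
    (hH : S ≤ S.comap H) (hE : S ≤ S.comap E) (hF : S ≤ S.comap F) (hH0 : S.mapQ S H hH ≠ 0) :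
    IsSl2Triple (S.mapQ S H hH) (S.mapQ S E hE) (S.mapQ S F hF) where
  h_ne_zero := hH0
  lie_e_f := by rw [mapQ_lie]; ext x; simp [t.lie_e_f]
  lie_h_e_nsmul := by rw [mapQ_lie]; ext x; simp [t.lie_h_e_nsmul]
  lie_h_f_nsmul := by rw [mapQ_lie]; ext x; simp [t.lie_h_f_nsmul]

theorem IsSl2Triple.pow_apply_ne_zero_of_apply_eq_neg_smul [CharZero k] [FiniteDimensional k V]
    {H E F : Module.End k V} (t : IsSl2Triple H E F) {v : V} (hv : v ≠ 0) {n : ℕ}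
    (hHv : H v = -(n : k) • v) : (E ^ n) v ≠ 0 := by
  obtain rfl | hn := eq_or_ne n 0
  · simpa using hv
  induction hd : finrank k V using Nat.strong_induction_on generalizing V with
  | _ d ih =>
  -- for the triple `(-H, F, E)`, `u` is primitive of weight `n + 2b` and `S` is its string
  obtain ⟨b, P⟩ := t.symm.exists_hasPrimitiveVectorWith_pow_toEnd_e hv (μ := (n : k))
    (by simp [hHv])
  set u := (F ^ b) v
  set S := E.krylovSubspace u
  by_cases hvS : v ∈ S
  · exact P.pow_toEnd_f_ne_zero_of_mem_krylovSubspace hvS hv (by simp [hHv])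
  have hE : S ≤ S.comap E := Module.End.krylovSubspace_le_comap_self
  have hF : S ≤ S.comap F := P.krylovSubspace_le_comap_toEnd_e
  have hH : S ≤ S.comap H := t.lie_e_f ▸ le_comap_lie hE hF
  have hvq : S.mkQ v ≠ 0 := by simpa using hvS
  have hHq : S.mapQ S H hH (S.mkQ v) = -(n : k) • S.mkQ v := by simp [hHv]
  have hH0 : S.mapQ S H hH ≠ 0 := fun h0 ↦ by simp [h0, hn, hvS] at hHq
  have hlt : finrank k (V ⧸ S) < d := by
    have hS : 0 < finrank k S := finrank_pos_iff_exists_ne_zero.mpr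
      ⟨⟨u, Module.End.self_mem_krylovSubspace⟩, by simpa using P.ne_zero⟩
    have := S.finrank_quotient_add_finrank
    omega
  intro h0
  refine ih _ hlt (t.mapQ hH hE hF hH0) hvq hHq rfl ?_
  rw [← mapQ_pow, mkQ_apply, mapQ_apply, h0, Quotient.mk_zero]

theorem IsSl2Triple.pow_toEnd_e_apply_ne_zero [CharZero k] [FiniteDimensional k V]
    {L : Type*} [LieRing L] [LieAlgebra k L] [LieRingModule L V] [LieModule k L V] {h e f : L}
    (t : IsSl2Triple h e f) {v : V} (hv : v ≠ 0) {n : ℕ} (hhv : ⁅h, v⁆ = -(n : k) • v) :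
    (toEnd k L V e ^ n) v ≠ 0 := by
  obtain rfl | hn := eq_or_ne n 0
  · simpa using hv
  have tEnd : IsSl2Triple (toEnd k L V h) (toEnd k L V e) (toEnd k L V f) :=
    { h_ne_zero := fun h0 ↦ smul_ne_zero (by simpa using hn : -(n : k) ≠ 0) hv <| by
        simpa [hhv] using LinearMap.congr_fun h0 v
      lie_e_f := by rw [← LieHom.map_lie, t.lie_e_f]
      lie_h_e_nsmul := by rw [← LieHom.map_lie, t.lie_h_e_nsmul, map_nsmul]
      lie_h_f_nsmul := by rw [← LieHom.map_lie, t.lie_h_f_nsmul, map_neg, map_nsmul] }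
  exact tEnd.pow_apply_ne_zero_of_apply_eq_neg_smul hv hhv

end

/-- Let `V` be a finite-dimensional module over `sl₂(k)` (`k` a field of characteristic 0)
with standard basis `(e, h, f)`, and `v ∈ V` a nonzero vector with `h • v = m v` for an
integer `m < 0`.  Then `e^{-m} • v ≠ 0`. -/
theorem stmt_8 (k : Type) [Field k] [CharZero k]
    (L : Type) [LieRing L] [LieAlgebra k L]
    (V : Type) [AddCommGroup V] [Module k V] [LieRingModule L V] [LieModule k L V]
    [FiniteDimensional k V]
    (e h f : L) (he : ⁅h, e⁆ = (2 : k) • e) (hf : ⁅h, f⁆ = (-2 : k) • f)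
    (hef : ⁅e, f⁆ = h)
    (v : V) (hv : v ≠ 0) (m : ℤ) (hm : m < 0) (hhv : ⁅h, v⁆ = (m : k) • v) :
    ((LieModule.toEnd k L V e) ^ (-m).toNat) v ≠ 0 := by
  have t : IsSl2Triple h e f :=
    { h_ne_zero := by
        rintro rfl
        exact smul_ne_zero (Int.cast_ne_zero.mpr hm.ne : (m : k) ≠ 0) hv (by rw [← hhv, zero_lie])
      lie_e_f := hef
      lie_h_e_nsmul := by rw [he, two_smul, two_nsmul]
      lie_h_f_nsmul := by rw [hf, neg_smul, two_smul, two_nsmul] }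
  have hmk : (m : k) = -((-m).toNat : k) := by
    rw [← Int.cast_natCast, Int.toNat_of_nonneg (neg_nonneg.mpr hm.le), Int.cast_neg, neg_neg]
  exact t.pow_toEnd_e_apply_ne_zero hv (by rw [hhv, hmk])
end

section
/- Let Λ be a finitely generated free abelian group, Λ' an abelian group with no 2-torsion, and S ⊆ Λ a subset with 0 ∈ S, −S = S, S + 2Λ ⊆ S, and such that S generates Λ. Suppose ε : S → Λ' satisfies ε(μ + 2λ) = ε(μ) + 2ε(λ) for all μ, λ ∈ S, and ε vanishes on some subset of S that is a ℤ-basis of Λ. Then ε = 0. -/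
/-!
Translations by `2λ` that preserve `ε` on `S` form a subgroup of `Λ`; the functional equation
puts every basis vector on which `ε` vanishes into it, so it is all of `Λ`. Hence
`ε (2s) = ε (0 + 2s) = ε 0 = 0`, while the functional equation at `(0, s)` gives
`ε (2s) = 2 ε s`, and `Λ'` has no `2`-torsion.
-/

theorem Module.Basis.addSubgroup_eq_top {Λ ι : Type*} [AddCommGroup Λ] (ν : Module.Basis ι ℤ Λ)
    {H : AddSubgroup Λ} (hν : ∀ i, ν i ∈ H) : H = ⊤ := by
  rw [← AddSubgroup.toIntSubmodule.injective.eq_iff, map_top, eq_top_iff, ← ν.span_eq,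
    Submodule.span_le]
  rintro _ ⟨i, rfl⟩
  exact hν i

section TwoPeriods

variable {Λ Λ' : Type*} [AddCommGroup Λ] [AddCommGroup Λ'] {S : Set Λ} (ε : Λ → Λ')

def twoPeriods (hS : ∀ s ∈ S, ∀ lam : Λ, s + 2 • lam ∈ S) : AddSubgroup Λ where
  carrier := {lam | ∀ μ ∈ S, ε (μ + 2 • lam) = ε μ}
  zero_mem' := by simp
  add_mem' {a b} ha hb μ hμ := by
    rw [smul_add, ← add_assoc, hb _ (hS μ hμ a), ha μ hμ]
  neg_mem' {a} ha μ hμ := by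
    have h := ha _ (hS μ hμ (-a))
    rw [smul_neg] at h ⊢
    rwa [neg_add_cancel_right, eq_comm] at h

theorem twoPeriods_eq_top (hS : ∀ s ∈ S, ∀ lam : Λ, s + 2 • lam ∈ S)
    (heq : ∀ μ ∈ S, ∀ lam ∈ S, ε (μ + 2 • lam) = ε μ + 2 • ε lam)
    {ι : Type*} (ν : Module.Basis ι ℤ Λ) (hν : ∀ i, ν i ∈ S ∧ ε (ν i) = 0) :
    twoPeriods ε hS = ⊤ :=
  ν.addSubgroup_eq_top fun i μ hμ => by rw [heq μ hμ _ (hν i).1, (hν i).2, smul_zero, add_zero]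

end TwoPeriods

theorem stmt_11_general (Λ : Type) [AddCommGroup Λ]
    (Λ' : Type) [AddCommGroup Λ']
    (h2tor : ∀ x : Λ', 2 • x = 0 → x = 0)
    (S : Set Λ) (h0S : (0 : Λ) ∈ S)
    (h2Λ : ∀ s ∈ S, ∀ lam : Λ, s + 2 • lam ∈ S)
    (ε : Λ → Λ')
    (heq : ∀ μ ∈ S, ∀ lam ∈ S, ε (μ + 2 • lam) = ε μ + 2 • ε lam)
    (hvan : ∃ (ι : Type) (ν : Module.Basis ι ℤ Λ), ∀ i : ι, ν i ∈ S ∧ ε (ν i) = 0) :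
    ∀ s ∈ S, ε s = 0 := by
  obtain ⟨ι, ν, hν⟩ := hvan
  have hε0 : ε 0 = 0 := by
    have h := heq 0 h0S 0 h0S
    rw [smul_zero, add_zero, left_eq_add] at h
    exact h2tor _ h
  intro s hs
  have hperiod : s ∈ twoPeriods ε h2Λ := by
    rw [twoPeriods_eq_top ε h2Λ heq ν hν]
    exact AddSubgroup.mem_top s
  have h := heq 0 h0S s hs
  rw [hperiod 0 h0S, hε0, zero_add, eq_comm] at h
  exact h2tor _ h

/-- Let `Λ` be a finitely generated free abelian group, `Λ'` an abelian group with no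
2-torsion, and `S ⊆ Λ` with `0 ∈ S`, `−S = S`, `S + 2Λ ⊆ S` and `S` generating `Λ`.
If `ε : S → Λ'` satisfies `ε(μ + 2λ) = ε(μ) + 2ε(λ)` for `μ, λ ∈ S` and vanishes on a
subset of `S` which is a `ℤ`-basis of `Λ`, then `ε = 0` on `S`. -/
theorem stmt_11 (Λ : Type) [AddCommGroup Λ] (n : ℕ) (bΛ : Module.Basis (Fin n) ℤ Λ)
    (Λ' : Type) [AddCommGroup Λ']
    (h2tor : ∀ x : Λ', 2 • x = 0 → x = 0)
    (S : Set Λ) (h0S : (0 : Λ) ∈ S) (hneg : ∀ s ∈ S, -s ∈ S)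
    (h2Λ : ∀ s ∈ S, ∀ lam : Λ, s + 2 • lam ∈ S)
    (hgen : AddSubgroup.closure S = ⊤)
    (ε : Λ → Λ')
    (heq : ∀ μ ∈ S, ∀ lam ∈ S, ε (μ + 2 • lam) = ε μ + 2 • ε lam)
    (hvan : ∃ (ι : Type) (ν : Module.Basis ι ℤ Λ), ∀ i : ι, ν i ∈ S ∧ ε (ν i) = 0) :
    ∀ s ∈ S, ε s = 0 :=
  stmt_11_general Λ Λ' h2tor S h0S h2Λ ε heq hvan
end

section
/- Define f : ℤ≥0 × {0,1,2} → ℤ≥1 by f(k,p) = 2^{k+p/2−1}(2^{k+p/2} + (−1)^k) if p ≠ 1, and f(k,p) = 2^{2k} if p = 1 (where for p ∈ {0,2}, p/2 means the integer p/2). Then f(k,p) = 1 if and only if (k,p) ∈ {(0,0), (1,0), (0,1)}, and f is injective on the complement of {(0,0), (1,0), (0,1)}. -/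
/-- `f(k,p) = 2^{k+⌊p/2⌋−1}(2^{k+⌊p/2⌋} + (−1)^k)` for `p ≠ 1`, and `f(k,1) = 2^{2k}`.
The division by 2 is exact since `d(d ± 1)/2 ∈ ℤ` for `d = 2^{k+⌊p/2⌋}`. -/
def fkp (k p : ℕ) : ℤ :=
  if p = 1 then 2 ^ (2 * k)
  else (2 ^ (k + p / 2) * (2 ^ (k + p / 2) + (-1 : ℤ) ^ k)) / 2

lemma odd_negonepow (k : ℕ) : Odd ((-1:ℤ)^k) := Odd.pow (⟨-1, by ring⟩ : Odd (-1:ℤ))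

lemma even_twopow (k : ℕ) (hk : 1 ≤ k) : Even ((2:ℤ)^k) := by
  obtain ⟨j, rfl⟩ : ∃ j, k = j + 1 := ⟨k - 1, by omega⟩
  exact ⟨2^j, by rw [pow_succ]; ring⟩

lemma odd0 (k : ℕ) (hk : 1 ≤ k) : Odd ((2:ℤ)^k + (-1)^k) :=
  (even_twopow k hk).add_odd (odd_negonepow k)

lemma odd2 (k : ℕ) : Odd ((2:ℤ)^(k+1) + (-1)^k) :=
  (even_twopow (k+1) (by omega)).add_odd (odd_negonepow k)

lemma aux_le (a b : ℕ) (m n : ℤ) (hm : Odd m) (h : (2:ℤ)^a * m = 2^b * n)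
    (hab : a ≤ b) : a = b ∧ m = n := by
  obtain ⟨c, rfl⟩ : ∃ c, b = a + c := ⟨b - a, by omega⟩
  have h2 : (2:ℤ)^a * m = 2^a * (2^c * n) := by rw [h, pow_add]; ring
  have hmn : m = 2^c * n := mul_left_cancel₀ (by positivity) h2
  have hc : c = 0 := by
    by_contra hc
    have he : Even ((2:ℤ)^c * n) := (even_twopow c (by omega)).mul_right n
    rw [← hmn] at he
    exact (Int.not_odd_iff_even.mpr he) hm
  subst hc
  simp at hmn
  exact ⟨by omega, hmn⟩

lemma aux (a b : ℕ) (m n : ℤ) (hm : Odd m) (hn : Odd n)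
    (h : (2:ℤ)^a * m = 2^b * n) : a = b ∧ m = n := by
  rcases le_total a b with hab | hab
  · exact aux_le a b m n hm h hab
  · obtain ⟨h1, h2⟩ := aux_le b a n m hn h.symm hab
    exact ⟨h1.symm, h2.symm⟩

lemma f0 (k : ℕ) (hk : 1 ≤ k) : fkp k 0 = 2^(k-1) * (2^k + (-1)^k) := by
  obtain ⟨j, rfl⟩ : ∃ j, k = j + 1 := ⟨k - 1, by omega⟩
  simp only [fkp, if_neg (by norm_num : ¬ (0:ℕ) = 1), Nat.add_sub_cancel, Nat.zero_div, Nat.add_zero]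
  have h : (2:ℤ)^(j+1) * (2^(j+1) + (-1)^(j+1)) = 2 * (2^j * (2^(j+1) + (-1)^(j+1))) := by
    rw [pow_succ]; ring
  rw [h, Int.mul_ediv_cancel_left _ two_ne_zero]

lemma f1 (k : ℕ) : fkp k 1 = 2^(2*k) := by simp [fkp]

lemma f2 (k : ℕ) : fkp k 2 = 2^k * (2^(k+1) + (-1)^k) := by
  simp only [fkp, if_neg (by norm_num : ¬ (2:ℕ) = 1)]
  norm_num
  have h : (2:ℤ)^(k+1) * (2^(k+1) + (-1)^k) = 2 * (2^k * (2^(k+1) + (-1)^k)) := by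
    rw [pow_succ]; ring
  rw [h, Int.mul_ediv_cancel_left _ two_ne_zero]

lemma odd2_ne_one (k : ℕ) : (2:ℤ)^(k+1) + (-1)^k ≠ 1 := by
  rcases Nat.even_or_odd k with h | h
  · rw [h.neg_one_pow]
    have := pow_pos (by norm_num : (0:ℤ) < 2) (k+1)
    intro heq; linarith
  · rw [h.neg_one_pow]
    have hk : 1 ≤ k := h.pos
    have h4 : (2:ℤ)^2 ≤ 2^(k+1) := pow_le_pow_right₀ (by norm_num) (by omega)
    intro heq; norm_num at h4; linarith

lemma odd0_ne_one (k : ℕ) (hk : 2 ≤ k) : (2:ℤ)^k + (-1)^k ≠ 1 := by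
  have h4 : (2:ℤ)^2 ≤ 2^k := pow_le_pow_right₀ (by norm_num) hk
  rcases Nat.even_or_odd k with h | h <;> rw [h.neg_one_pow] <;> intro heq <;>
    norm_num at h4 <;> linarith

lemma no01 (k k' : ℕ) (hk : 2 ≤ k) : fkp k 0 ≠ fkp k' 1 := by
  intro heq
  rw [f0 k (by omega), f1] at heq
  have h := aux (k-1) (2*k') _ 1 (odd0 k (by omega)) odd_one (by rw [mul_one]; exact heq)
  exact odd0_ne_one k hk h.2

lemma no02 (k k' : ℕ) (hk : 2 ≤ k) : fkp k 0 ≠ fkp k' 2 := by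
  intro heq
  rw [f0 k (by omega), f2] at heq
  obtain ⟨ha, hb⟩ := aux (k-1) k' _ _ (odd0 k (by omega)) (odd2 k') heq
  obtain rfl : k = k' + 1 := by omega
  have h1 : ((-1:ℤ))^(k'+1) = (-1)^k' := by linarith
  rw [pow_succ] at h1
  rcases Nat.even_or_odd k' with h | h <;> rw [h.neg_one_pow] at h1 <;> norm_num at h1

lemma no12 (k k' : ℕ) (hk : k ≠ 0) : fkp k 1 ≠ fkp k' 2 := by
  intro heq
  rw [f1, f2] at heq
  have h := aux (2*k) k' 1 _ odd_one (odd2 k') (by rw [mul_one]; exact heq)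
  exact odd2_ne_one k' h.2.symm

/-- `f(k,p) = 1` iff `(k,p) ∈ {(0,0), (1,0), (0,1)}`, and `f` is injective on the
complement of `{(0,0), (1,0), (0,1)}` in `ℤ≥0 × {0,1,2}`. -/
theorem stmt_12 :
    (∀ k p : ℕ, p ≤ 2 →
      (fkp k p = 1 ↔ (k, p) = (0, 0) ∨ (k, p) = (1, 0) ∨ (k, p) = (0, 1))) ∧
    (∀ k p k' p' : ℕ, p ≤ 2 → p' ≤ 2 →
      ¬((k, p) = (0, 0) ∨ (k, p) = (1, 0) ∨ (k, p) = (0, 1)) →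
      ¬((k', p') = (0, 0) ∨ (k', p') = (1, 0) ∨ (k', p') = (0, 1)) →
      fkp k p = fkp k' p' → (k, p) = (k', p')) := by
  constructor
  · intro k p hp
    constructor
    · intro h1
      interval_cases p
      · rcases Nat.eq_zero_or_pos k with rfl | hk
        · left; rfl
        · rw [f0 k hk] at h1
          obtain ⟨ha, hb⟩ := aux (k-1) 0 _ 1 (odd0 k hk) odd_one (by simpa using h1)
          have : k = 1 := by omega
          subst this; right; left; rfl
      · rw [f1] at h1
        have hk : k = 0 := by
          by_contra hk
          have h4 : (2:ℤ)^2 ≤ 2^(2*k) := pow_le_pow_right₀ (by norm_num) (by omega)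
          norm_num at h4; linarith
        subst hk; right; right; rfl
      · rw [f2] at h1
        obtain ⟨ha, hb⟩ := aux k 0 _ 1 (odd2 k) odd_one (by simpa using h1)
        exact absurd hb (odd2_ne_one k)
    · rintro (h | h | h) <;> simp only [Prod.mk.injEq] at h <;>
        obtain ⟨rfl, rfl⟩ := h <;> norm_num [fkp]
  · intro k p k' p' hp hp' hne hne' heq
    interval_cases p <;> interval_cases p' <;>
      simp only [Prod.mk.injEq, and_true, and_false, or_false, false_or, not_or] at hne hne' ⊢
    -- (0,0)
    · have hk : 2 ≤ k := by omega
      have hk' : 2 ≤ k' := by omega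
      rw [f0 k (by omega), f0 k' (by omega)] at heq
      obtain ⟨ha, _⟩ := aux _ _ _ _ (odd0 k (by omega)) (odd0 k' (by omega)) heq
      omega
    · have hk : 2 ≤ k := by omega
      exact absurd heq (no01 k k' hk)
    · have hk : 2 ≤ k := by omega
      exact absurd heq (no02 k k' hk)
    · have hk' : 2 ≤ k' := by omega
      exact absurd heq.symm (no01 k' k hk')
    · have hk : k ≠ 0 := by omega
      rw [f1, f1] at heq
      obtain ⟨ha, _⟩ := aux (2*k) (2*k') 1 1 odd_one odd_one (by simpa using heq)
      omega
    · have hk : k ≠ 0 := by omega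
      exact absurd heq (no12 k k' hk)
    · have hk' : 2 ≤ k' := by omega
      exact absurd heq.symm (no02 k' k hk')
    · have hk' : k' ≠ 0 := by omega
      exact absurd heq.symm (no12 k' k hk')
    · rw [f2, f2] at heq
      obtain ⟨ha, _⟩ := aux _ _ _ _ (odd2 k) (odd2 k') heq
      omega
end

section
/- Let A be a unital associative algebra over a field k of characteristic 0 and r ≥ 1. The derived Lie algebra of Mat_{r+1}(A) (with the commutator bracket) equals {X ∈ Mat_{r+1}(A) : trace(X) ∈ [A,A]}, where [A,A] is the k-span of commutators ab − ba in A. -/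
/-!
The trace of a matrix commutator `XY - YX` is the sum of the scalar commutators
`X i j * Y j i - Y j i * X i j`, so traces of elements of the derived algebra lie in `[A, A]`.
Conversely, modulo commutators every matrix is congruent to `single i₀ i₀ (trace X)`:
off-diagonal matrix units are commutators (`E_ij a = [E_ij a, E_jj 1]`) and diagonal ones can be
moved to a fixed position (`E_ii a - E_jj a = [E_ij a, E_ji 1]`). Finally `single i₀ i₀` maps
`[A, A]` into the derived algebra, since `[E_ii a, E_ii b] = E_ii (ab - ba)`.
-/

open Matrix

variable (R M : Type*) [Semiring R] [NonUnitalNonAssocRing M] [Module R M]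

/-- The derived algebra `[M, M]` of an associative algebra viewed as a Lie algebra. -/
def commutatorSpan : Submodule R M :=
  Submodule.span R {z : M | ∃ a b : M, z = a * b - b * a}

variable {R M}

lemma mul_sub_mul_mem_commutatorSpan (a b : M) : a * b - b * a ∈ commutatorSpan R M :=
  Submodule.subset_span ⟨a, b, rfl⟩

namespace Matrix

variable {n A : Type*} [Fintype n] [Ring A] [Module R A]

lemma trace_mul_sub_mul (X Y : Matrix n n A) :
    (X * Y - Y * X).trace = ∑ i, ∑ j, (X i j * Y j i - Y j i * X i j) := by
  rw [trace_sub]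
  simp only [trace, diag, mul_apply, Finset.sum_sub_distrib]
  rw [Finset.sum_comm (f := fun i j => Y i j * X j i)]

lemma trace_mem_commutatorSpan {X : Matrix n n A} (hX : X ∈ commutatorSpan R (Matrix n n A)) :
    X.trace ∈ commutatorSpan R A := by
  suffices commutatorSpan R (Matrix n n A) ≤
      (commutatorSpan R A).comap (traceLinearMap n R A) from this hX
  refine Submodule.span_le.2 ?_
  rintro _ ⟨X, Y, rfl⟩
  simp only [SetLike.mem_coe, Submodule.mem_comap, traceLinearMap_apply, trace_mul_sub_mul]
  exact Submodule.sum_mem _ fun i _ => Submodule.sum_mem _ fun j _ =>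
    mul_sub_mul_mem_commutatorSpan _ _

variable [DecidableEq n]

lemma single_mem_commutatorSpan_of_ne {i j : n} (hij : i ≠ j) (a : A) :
    single i j a ∈ commutatorSpan R (Matrix n n A) := by
  have := mul_sub_mul_mem_commutatorSpan (R := R) (single i j a) (single j j (1 : A))
  simpa only [single_mul_single_same, single_mul_single_of_ne _ _ _ _ hij.symm, mul_one,
    sub_zero] using this

lemma single_sub_single_mem_commutatorSpan (i j : n) (a : A) :
    single i i a - single j j a ∈ commutatorSpan R (Matrix n n A) := by
  have := mul_sub_mul_mem_commutatorSpan (R := R) (single i j a) (single j i (1 : A))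
  rwa [single_mul_single_same, single_mul_single_same, mul_one, one_mul] at this

lemma single_mem_commutatorSpan {a : A} (ha : a ∈ commutatorSpan R A) (i : n) :
    single i i a ∈ commutatorSpan R (Matrix n n A) := by
  suffices commutatorSpan R A ≤
      (commutatorSpan R (Matrix n n A)).comap (singleLinearMap R i i) from this ha
  refine Submodule.span_le.2 ?_
  rintro _ ⟨a, b, rfl⟩
  have := mul_sub_mul_mem_commutatorSpan (R := R) (single i i a) (single i i b)
  rw [single_mul_single_same, single_mul_single_same] at this
  change single i i (a * b - b * a) ∈ commutatorSpan R (Matrix n n A)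
  rwa [sub_eq_add_neg, single_add, ← single_neg, ← sub_eq_add_neg]

lemma sub_single_trace_mem_commutatorSpan (X : Matrix n n A) (i₀ : n) :
    X - single i₀ i₀ X.trace ∈ commutatorSpan R (Matrix n n A) := by
  induction X using Matrix.induction_on' with
  | h_zero => simp
  | h_add X Y hX hY =>
    rw [trace_add, single_add, add_sub_add_comm]
    exact add_mem hX hY
  | h_std_basis i j a =>
    obtain rfl | hij := eq_or_ne i j
    · rw [trace_single_eq_same]
      exact single_sub_single_mem_commutatorSpan _ _ _
    · rw [trace_single_eq_of_ne _ _ _ hij, single_zero, sub_zero]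
      exact single_mem_commutatorSpan_of_ne hij _

theorem mem_commutatorSpan_iff_trace_mem [Nonempty n] {X : Matrix n n A} :
    X ∈ commutatorSpan R (Matrix n n A) ↔ X.trace ∈ commutatorSpan R A := by
  refine ⟨trace_mem_commutatorSpan, fun h => ?_⟩
  obtain ⟨i₀⟩ := ‹Nonempty n›
  rw [← sub_add_cancel X (single i₀ i₀ X.trace)]
  exact add_mem (sub_single_trace_mem_commutatorSpan X i₀) (single_mem_commutatorSpan h i₀)

end Matrix

theorem stmt_15_general (k : Type) [Field k] (A : Type) [Ring A] [Algebra k A]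
    (r : ℕ) :
    (Submodule.span k
        {Z : Matrix (Fin (r + 1)) (Fin (r + 1)) A |
          ∃ X Y : Matrix (Fin (r + 1)) (Fin (r + 1)) A, Z = X * Y - Y * X} :
        Set (Matrix (Fin (r + 1)) (Fin (r + 1)) A))
      = {X : Matrix (Fin (r + 1)) (Fin (r + 1)) A |
          X.trace ∈ Submodule.span k {z : A | ∃ a b : A, z = a * b - b * a}} :=
  Set.ext fun _ => Matrix.mem_commutatorSpan_iff_trace_mem

/-- Let `A` be a unital associative algebra over a field `k` of characteristic 0 and
`r ≥ 1`.  The derived Lie algebra of `Mat_{r+1}(A)` (the `k`-span of all commutators of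
matrices) equals `{X : trace X ∈ [A,A]}`, where `[A,A]` is the `k`-span of the
commutators `ab − ba` in `A`. -/
theorem stmt_15 (k : Type) [Field k] [CharZero k] (A : Type) [Ring A] [Algebra k A]
    (r : ℕ) (hr : 1 ≤ r) :
    (Submodule.span k
        {Z : Matrix (Fin (r + 1)) (Fin (r + 1)) A |
          ∃ X Y : Matrix (Fin (r + 1)) (Fin (r + 1)) A, Z = X * Y - Y * X} :
        Set (Matrix (Fin (r + 1)) (Fin (r + 1)) A))
      = {X : Matrix (Fin (r + 1)) (Fin (r + 1)) A |
          X.trace ∈ Submodule.span k {z : A | ∃ a b : A, z = a * b - b * a}} :=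
  stmt_15_general k A r
end
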